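/- arXiv:math/0005201 — 3 statements merged into one kernel-verified Lean document; each statement's English description precedes it below -/
import Mathlib

section
/- Let $A$ be a commutative ring with pairwise commuting derivations $\tau_1,\dots,\tau_n$, and let $g = (g^{ij}) \in GL_n(A)$ satisfy the integrability condition $g^{ip}\tau_p(g^{jq}) = g^{jp}\tau_p(g^{iq})$ for all $i,j,q$ (summation over repeated indices). Then $\tau_p(g^{-1\,qr}) = \tau_q(g^{-1\,pr})$ for all $p,q,r$, where $g^{-1\,qr}$ denotes the $(q,r)$ entry of $g^{-1}$. -/
open Matrix Finset

/-- if the commuting derivations `τᵢ` and `g ∈ GL_n(A)` satisfy the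
integrability condition `gⁱᵖτ_p(gʲᑫ) = gʲᵖτ_p(gⁱᑫ)` (summing over `p`), then
`τ_p(g⁻¹ q r) = τ_q(g⁻¹ p r)`. -/
theorem deriv_inv_symm {A : Type*} [CommRing A] {n : ℕ}
    (τ : Fin n → Derivation ℤ A A)
    (hcomm : ∀ i j, ∀ x : A, τ i (τ j x) = τ j (τ i x))
    (g : Matrix (Fin n) (Fin n) A) (hg : IsUnit g.det)
    (hint : ∀ i j q, ∑ p, g i p * τ p (g j q) = ∑ p, g j p * τ p (g i q)) :
    ∀ p q r, τ p (g⁻¹ q r) = τ q (g⁻¹ p r) := by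
  have hinvg : g⁻¹ * g = 1 := nonsing_inv_mul g hg
  have hginv : g * g⁻¹ = 1 := mul_nonsing_inv g hg
  have hdelta1 : ∀ a r : Fin n, ∑ b, g a b * g⁻¹ b r = if a = r then 1 else 0 := by
    intro a r
    have := congrFun (congrFun hginv a) r
    simpa [Matrix.mul_apply, Matrix.one_apply] using this
  have hdelta2 : ∀ p i : Fin n, ∑ c, g⁻¹ p c * g c i = if p = i then 1 else 0 := by
    intro p i
    have := congrFun (congrFun hinvg p) i
    simpa [Matrix.mul_apply, Matrix.one_apply] using this
  -- key formula: derivative of the inverse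
  have keyA : ∀ (k q r : Fin n), τ k (g⁻¹ q r)
      = -∑ a, ∑ b, g⁻¹ q a * τ k (g a b) * g⁻¹ b r := by
    intro k q r
    have E : ∀ b, ∑ a, τ k (g⁻¹ q a) * g a b = -∑ a, g⁻¹ q a * τ k (g a b) := by
      intro b
      have h1 : ∑ a, g⁻¹ q a * g a b = (1 : Matrix (Fin n) (Fin n) A) q b := by
        rw [← hinvg, Matrix.mul_apply]
      have h2 : τ k ((1 : Matrix (Fin n) (Fin n) A) q b) = 0 := by
        rcases eq_or_ne q b with h | h <;> simp [Matrix.one_apply, h]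
      have h3 := congrArg (τ k) h1
      rw [h2, map_sum] at h3
      simp only [Derivation.leibniz, smul_eq_mul] at h3
      rw [Finset.sum_add_distrib] at h3
      have h4 : ∑ a, τ k (g⁻¹ q a) * g a b = ∑ a, g a b * τ k (g⁻¹ q a) := by
        exact Finset.sum_congr rfl fun a _ => mul_comm _ _
      rw [h4]
      exact eq_neg_of_add_eq_zero_right h3
    calc τ k (g⁻¹ q r)
        = ∑ a, τ k (g⁻¹ q a) * (if a = r then (1:A) else 0) := by
          simp [mul_ite]
      _ = ∑ a, τ k (g⁻¹ q a) * ∑ b, g a b * g⁻¹ b r := by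
          exact Finset.sum_congr rfl fun a _ => by rw [hdelta1]
      _ = ∑ a, ∑ b, τ k (g⁻¹ q a) * (g a b * g⁻¹ b r) := by
          exact Finset.sum_congr rfl fun a _ => Finset.mul_sum _ _ _
      _ = ∑ b, ∑ a, τ k (g⁻¹ q a) * (g a b * g⁻¹ b r) := Finset.sum_comm
      _ = ∑ b, (∑ a, τ k (g⁻¹ q a) * g a b) * g⁻¹ b r := by
          refine Finset.sum_congr rfl fun b _ => ?_
          rw [Finset.sum_mul]
          exact Finset.sum_congr rfl fun a _ => by ring
      _ = ∑ b, (-∑ a, g⁻¹ q a * τ k (g a b)) * g⁻¹ b r := by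
          exact Finset.sum_congr rfl fun b _ => by rw [E]
      _ = -∑ b, ∑ a, g⁻¹ q a * τ k (g a b) * g⁻¹ b r := by
          rw [← Finset.sum_neg_distrib]
          refine Finset.sum_congr rfl fun b _ => ?_
          rw [neg_mul, Finset.sum_mul]
      _ = -∑ a, ∑ b, g⁻¹ q a * τ k (g a b) * g⁻¹ b r := by rw [Finset.sum_comm]
  -- insertion of identity
  have ins : ∀ (p : Fin n) (a b : Fin n),
      τ p (g a b) = ∑ c, g⁻¹ p c * ∑ i, g c i * τ i (g a b) := by
    intro p a b
    symm
    calc ∑ c, g⁻¹ p c * ∑ i, g c i * τ i (g a b)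
        = ∑ c, ∑ i, (g⁻¹ p c * g c i) * τ i (g a b) := by
          refine Finset.sum_congr rfl fun c _ => ?_
          rw [Finset.mul_sum]
          exact Finset.sum_congr rfl fun i _ => by ring
      _ = ∑ i, ∑ c, (g⁻¹ p c * g c i) * τ i (g a b) := Finset.sum_comm
      _ = ∑ i, (∑ c, g⁻¹ p c * g c i) * τ i (g a b) := by
          exact Finset.sum_congr rfl fun i _ => (Finset.sum_mul _ _ _).symm
      _ = ∑ i, (if p = i then (1:A) else 0) * τ i (g a b) := by
          exact Finset.sum_congr rfl fun i _ => by rw [hdelta2]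
      _ = τ p (g a b) := by simp
  -- the symmetric form
  set S : Fin n → Fin n → Fin n → A := fun p q r =>
    ∑ a, ∑ c, ∑ b, (g⁻¹ q a * g⁻¹ p c) * (∑ i, g c i * τ i (g a b)) * g⁻¹ b r with hS
  have main : ∀ p q r, τ p (g⁻¹ q r) = -(S p q r) := by
    intro p q r
    rw [keyA p q r, hS]
    congr 1
    calc ∑ a, ∑ b, g⁻¹ q a * τ p (g a b) * g⁻¹ b r
        = ∑ a, ∑ b, ∑ c, (g⁻¹ q a * g⁻¹ p c) * (∑ i, g c i * τ i (g a b)) * g⁻¹ b r := by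
          refine Finset.sum_congr rfl fun a _ => Finset.sum_congr rfl fun b _ => ?_
          rw [ins p a b, Finset.mul_sum, Finset.sum_mul]
          exact Finset.sum_congr rfl fun c _ => by ring
      _ = ∑ a, ∑ c, ∑ b, (g⁻¹ q a * g⁻¹ p c) * (∑ i, g c i * τ i (g a b)) * g⁻¹ b r := by
          exact Finset.sum_congr rfl fun a _ => Finset.sum_comm
  have hsymm : ∀ p q r, S p q r = S q p r := by
    intro p q r
    rw [hS]
    calc ∑ a, ∑ c, ∑ b, (g⁻¹ q a * g⁻¹ p c) * (∑ i, g c i * τ i (g a b)) * g⁻¹ b r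
        = ∑ a, ∑ c, ∑ b, (g⁻¹ q a * g⁻¹ p c) * (∑ i, g a i * τ i (g c b)) * g⁻¹ b r := by
          refine Finset.sum_congr rfl fun a _ => Finset.sum_congr rfl fun c _ =>
            Finset.sum_congr rfl fun b _ => ?_
          rw [hint c a b]
      _ = ∑ c, ∑ a, ∑ b, (g⁻¹ q a * g⁻¹ p c) * (∑ i, g a i * τ i (g c b)) * g⁻¹ b r :=
          Finset.sum_comm
      _ = ∑ a, ∑ c, ∑ b, (g⁻¹ p a * g⁻¹ q c) * (∑ i, g c i * τ i (g a b)) * g⁻¹ b r := by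
          refine Finset.sum_congr rfl fun a _ => Finset.sum_congr rfl fun c _ =>
            Finset.sum_congr rfl fun b _ => ?_
          ring
  intro p q r
  rw [main p q, main q p, hsymm p q r]
end

section
/- Let $A$ be a commutative ring with pairwise commuting derivations $\tau_1,\dots,\tau_n$, and $g, A' \in GL_n(A) \times GL_m(A)$ (with $g$ satisfying $g^{ip}\tau_p(g^{jq}) = g^{jp}\tau_p(g^{iq})$). Define $g^{i\nu\nu} = g^{iq}\,\tau_q((A'^{-1})^{\nu\mu})\,A'^{\mu\nu}$ (summing over repeated indices, including $\nu$). Then $g^{ip}\,\tau_p(g^{j\nu\nu}) = g^{jq}\,\tau_q(g^{i\nu\nu})$ for all $i,j$. -/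
open Matrix Finset

private lemma mapD_mul {A : Type*} [CommRing A] {m : ℕ} (d : Derivation ℤ A A)
    (M N : Matrix (Fin m) (Fin m) A) :
    (M * N).map ⇑d = M.map ⇑d * N + M * N.map ⇑d := by
  ext i j
  simp only [Matrix.map_apply, Matrix.mul_apply, Matrix.add_apply, map_sum]
  rw [← Finset.sum_add_distrib]
  refine Finset.sum_congr rfl fun k _ => ?_
  rw [Derivation.leibniz]
  simp only [smul_eq_mul]
  ring

private lemma trace_mapD {A : Type*} [CommRing A] {m : ℕ} (d : Derivation ℤ A A)
    (M : Matrix (Fin m) (Fin m) A) :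
    d (Matrix.trace M) = Matrix.trace (M.map ⇑d) := by
  simp [Matrix.trace, Matrix.diag, map_sum]

/-- with `g^{iνν} = gⁱᑫ τ_q((A'⁻¹)^{νμ}) A'^{μν} = gⁱᑫ tr(τ_q(A'⁻¹)A')`,
one has `gⁱᵖ τ_p(g^{jνν}) = gʲᑫ τ_q(g^{iνν})`. -/
theorem deriv_trace_symm {A : Type*} [CommRing A] {n m : ℕ}
    (τ : Fin n → Derivation ℤ A A)
    (hcomm : ∀ i j, ∀ x : A, τ i (τ j x) = τ j (τ i x))
    (g : Matrix (Fin n) (Fin n) A) (hg : IsUnit g.det)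
    (hint : ∀ i j q, ∑ p, g i p * τ p (g j q) = ∑ p, g j p * τ p (g i q))
    (A' : Matrix (Fin m) (Fin m) A) (hA' : IsUnit A'.det)
    (G : Fin n → A)
    (hG : ∀ i, G i = ∑ q, g i q * Matrix.trace ((A'⁻¹).map ⇑(τ q) * A')) :
    ∀ i j, ∑ p, g i p * τ p (G j) = ∑ q, g j q * τ q (G i) := by
  set Ai := A'⁻¹ with hAi
  set T : Fin n → A := fun q => Matrix.trace (Ai.map ⇑(τ q) * A') with hT
  have hT' : ∀ q, Matrix.trace (Ai.map ⇑(τ q) * A') = T q := fun q => rfl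
  have hmulinv : A' * Ai = 1 := Matrix.mul_nonsing_inv A' hA'
  have hinvmul : Ai * A' = 1 := Matrix.nonsing_inv_mul A' hA'
  have hder : ∀ p, A'.map ⇑(τ p) = -(A' * Ai.map ⇑(τ p) * A') := by
    intro p
    have h1 : (A' * Ai).map ⇑(τ p) = 0 := by
      rw [hmulinv]
      ext i j
      by_cases h : i = j <;> simp [Matrix.map_apply, Matrix.one_apply, h]
    rw [mapD_mul] at h1
    have h2 : A'.map ⇑(τ p) * Ai = -(A' * Ai.map ⇑(τ p)) := by
      linear_combination (norm := module) h1
    calc A'.map ⇑(τ p) = A'.map ⇑(τ p) * Ai * A' := by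
          rw [Matrix.mul_assoc, hinvmul, Matrix.mul_one]
      _ = -(A' * Ai.map ⇑(τ p)) * A' := by rw [h2]
      _ = -(A' * Ai.map ⇑(τ p) * A') := by rw [Matrix.neg_mul]
  have hkey : ∀ p q, τ p (T q) = τ q (T p) := by
    intro p q
    have hc : (Ai.map ⇑(τ q)).map ⇑(τ p) = (Ai.map ⇑(τ p)).map ⇑(τ q) := by
      ext i j; simp [Matrix.map_apply, hcomm p q]
    have hs : ∀ p q : Fin n, Matrix.trace (Ai.map ⇑(τ q) * A'.map ⇑(τ p))
        = -Matrix.trace ((Ai.map ⇑(τ p) * A') * (Ai.map ⇑(τ q) * A')) := by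
      intro p q
      rw [hder p, Matrix.mul_neg, Matrix.trace_neg]
      congr 1
      rw [show Ai.map ⇑(τ q) * (A' * Ai.map ⇑(τ p) * A')
          = (Ai.map ⇑(τ q) * A') * (Ai.map ⇑(τ p) * A') from by noncomm_ring]
      exact Matrix.trace_mul_comm _ _
    show τ p (Matrix.trace (Ai.map ⇑(τ q) * A')) = τ q (Matrix.trace (Ai.map ⇑(τ p) * A'))
    simp only [trace_mapD, mapD_mul]
    rw [Matrix.trace_add, Matrix.trace_add, hc, hs p q, hs q p,
      Matrix.trace_mul_comm (Ai.map ⇑(τ p) * A')]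
  intro i j
  simp only [hG, hT']
  have expand : ∀ a b : Fin n,
      ∑ p, g a p * τ p (∑ q, g b q * T q)
      = (∑ q, (∑ p, g a p * τ p (g b q)) * T q)
        + ∑ p, ∑ q, g a p * g b q * τ p (T q) := by
    intro a b
    simp only [map_sum, Derivation.leibniz, smul_eq_mul, mul_add, Finset.mul_sum,
      Finset.sum_add_distrib]
    rw [add_comm]
    congr 1
    · rw [Finset.sum_comm]
      refine Finset.sum_congr rfl fun q _ => ?_
      rw [Finset.sum_mul]
      exact Finset.sum_congr rfl fun p _ => by ring
    · exact Finset.sum_congr rfl fun p _ => Finset.sum_congr rfl fun q _ => by ring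
  rw [expand i j, expand j i]
  congr 1
  · exact Finset.sum_congr rfl fun q _ => by rw [hint i j q]
  · rw [Finset.sum_comm]
    exact Finset.sum_congr rfl fun p _ => Finset.sum_congr rfl fun q _ => by
      rw [hkey q p]; ring
end

section
/- Let $R$ be a commutative ring, $\tau_1,\dots,\tau_n$ pairwise commuting derivations of $R$, and $g \in GL_n(R)$ satisfying $g^{ip}\tau_p(g^{jq}) = g^{jp}\tau_p(g^{iq})$ for all $i,j,q$. Then $g^{ip}\,\tau_q\tau_p(g^{jq}) = g^{jq}\,\tau_p\tau_q(g^{ip})$ for all $i,j$ (summation over $p,q$). -/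
open Matrix Finset

/-- under the integrability condition `gⁱᵖτ_p(gʲᑫ) = gʲᵖτ_p(gⁱᑫ)`,
one has `gⁱᵖ τ_q τ_p(gʲᑫ) = gʲᑫ τ_p τ_q(gⁱᵖ)` (summation over `p, q`). -/
theorem deriv2_symm {R : Type*} [CommRing R] {n : ℕ}
    (τ : Fin n → Derivation ℤ R R)
    (hcomm : ∀ i j, ∀ x : R, τ i (τ j x) = τ j (τ i x))
    (g : Matrix (Fin n) (Fin n) R) (hg : IsUnit g.det)
    (hint : ∀ i j q, ∑ p, g i p * τ p (g j q) = ∑ p, g j p * τ p (g i q)) :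
    ∀ i j, ∑ p, ∑ q, g i p * τ q (τ p (g j q)) = ∑ p, ∑ q, g j q * τ p (τ q (g i p)) := by
  intro i j
  -- apply τ_q to the integrability condition and sum over q
  have key : ∑ q, ∑ p, (g i p * τ q (τ p (g j q)) + τ p (g j q) * τ q (g i p))
      = ∑ q, ∑ p, (g j p * τ q (τ p (g i q)) + τ p (g i q) * τ q (g j p)) := by
    refine Finset.sum_congr rfl fun q _ => ?_
    have := congrArg (τ q) (hint i j q)
    simpa [map_sum, Derivation.leibniz, smul_eq_mul] using this
  -- the first-order terms on both sides agree after swapping p ↔ q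
  have first : ∑ q, ∑ p, τ p (g j q) * τ q (g i p)
      = ∑ q, ∑ p, τ p (g i q) * τ q (g j p) := by
    rw [Finset.sum_comm]
    exact Finset.sum_congr rfl fun q _ => Finset.sum_congr rfl fun p _ => mul_comm _ _
  have second : ∑ q, ∑ p, g i p * τ q (τ p (g j q))
      = ∑ q, ∑ p, g j p * τ q (τ p (g i q)) := by
    have h1 := key
    simp only [Finset.sum_add_distrib] at h1
    rw [first] at h1
    exact add_right_cancel h1
  calc ∑ p, ∑ q, g i p * τ q (τ p (g j q))
      = ∑ q, ∑ p, g i p * τ q (τ p (g j q)) := Finset.sum_comm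
    _ = ∑ q, ∑ p, g j p * τ q (τ p (g i q)) := second
    _ = ∑ p, ∑ q, g j q * τ p (τ q (g i p)) := rfl
end
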